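/- Let (G,Λ) be a pseudo free self-similar k-graph such that g·v = v for all g ∈ G and v ∈ Λ^0, and let T be a maximal tail of Λ. If every cycline triple of (G, ΛT) is a cycline pair of (G, ΛT), then every cycline triple of (G, H_T ΛT) is a cycline pair of (G, H_T ΛT). -/

import Mathlib

/-- A `k`-graph: a countable small category equipped with a degree functor
`d : Λ → ℕ^k` satisfying the unique factorization property.  Objects are
identified with their identity morphisms (the degree-zero paths);
`comp μ ν` is the composite `μν` (a junk value when `s μ ≠ r ν`). -/
structure KGraph (k : ℕ) where
  Path : Type
  countable : Countable Path
  r : Path → Path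
  s : Path → Path
  d : Path → Fin k → ℕ
  comp : Path → Path → Path
  d_r : ∀ μ, d (r μ) = 0
  d_s : ∀ μ, d (s μ) = 0
  r_r : ∀ μ, r (r μ) = r μ
  s_r : ∀ μ, s (r μ) = r μ
  r_s : ∀ μ, r (s μ) = s μ
  s_s : ∀ μ, s (s μ) = s μ
  eq_r_of_d_eq_zero : ∀ μ, d μ = 0 → μ = r μ
  comp_id : ∀ μ, comp μ (s μ) = μ
  id_comp : ∀ μ, comp (r μ) μ = μ
  r_comp : ∀ μ ν, s μ = r ν → r (comp μ ν) = r μ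
  s_comp : ∀ μ ν, s μ = r ν → s (comp μ ν) = s ν
  d_comp : ∀ μ ν, s μ = r ν → d (comp μ ν) = d μ + d ν
  comp_assoc : ∀ μ ν ξ, s μ = r ν → s ν = r ξ →
    comp (comp μ ν) ξ = comp μ (comp ν ξ)
  factor : ∀ μ p q, d μ = p + q →
    ∃! αβ : Path × Path, s αβ.1 = r αβ.2 ∧ d αβ.1 = p ∧ d αβ.2 = q ∧
      comp αβ.1 αβ.2 = μ

namespace KGraph

variable {k : ℕ} (Λ : KGraph k)

/-- The vertices of a `k`-graph are the degree-zero paths. -/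
def IsVertex (v : Λ.Path) : Prop := Λ.d v = 0

/-- `Λ` is row-finite if `|v Λ^p| < ∞` for every vertex `v` and `p ∈ ℕ^k`. -/
def RowFinite : Prop :=
  ∀ v, Λ.IsVertex v → ∀ p : Fin k → ℕ, {μ | Λ.r μ = v ∧ Λ.d μ = p}.Finite

/-- `Λ` is source-free if `v Λ^p ≠ ∅` for every vertex `v` and `p ∈ ℕ^k`. -/
def SourceFree : Prop :=
  ∀ v, Λ.IsVertex v → ∀ p : Fin k → ℕ, ∃ μ, Λ.r μ = v ∧ Λ.d μ = p

/-- `ΛT`, the set of paths of `Λ` whose source lies in `T`. -/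
def tailPaths (T : Set Λ.Path) : Set Λ.Path := {μ | Λ.s μ ∈ T}

/-- `H Λ T`, the set of paths with source in `T` and range in `H`. -/
def cornerPaths (T H : Set Λ.Path) : Set Λ.Path := {μ | Λ.s μ ∈ T ∧ Λ.r μ ∈ H}

end KGraph

/-- A maximal tail of a `k`-graph. -/
structure MaximalTail {k : ℕ} (Λ : KGraph k) (T : Set Λ.Path) : Prop where
  nonempty : T.Nonempty
  vertex : ∀ v ∈ T, Λ.IsVertex v
  backward_closed : ∀ w, Λ.IsVertex w → ∀ v ∈ T, (∃ μ, Λ.r μ = w ∧ Λ.s μ = v) → w ∈ T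
  reaches : ∀ v ∈ T, ∀ p : Fin k → ℕ, ∃ μ, Λ.r μ = v ∧ Λ.d μ = p ∧ Λ.s μ ∈ T
  directed : ∀ v₁ ∈ T, ∀ v₂ ∈ T, ∃ w ∈ T,
    (∃ μ, Λ.r μ = v₁ ∧ Λ.s μ = w) ∧ (∃ ν, Λ.r ν = v₂ ∧ Λ.s ν = w)

/-- An infinite path of a `k`-graph, i.e. a degree-preserving functor
`x : Ω_k → Λ`; here `val p n` records the segment `x(p, p + n)`. -/
structure InfPath {k : ℕ} (Λ : KGraph k) where
  val : (Fin k → ℕ) → (Fin k → ℕ) → Λ.Path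
  d_val : ∀ p n, Λ.d (val p n) = n
  r_val : ∀ p n, Λ.r (val p n) = val p 0
  s_val : ∀ p n, Λ.s (val p n) = val (p + n) 0
  comp_val : ∀ p m n, Λ.comp (val p m) (val (p + m) n) = val p (m + n)

namespace InfPath

variable {k : ℕ} {Λ : KGraph k}

/-- The shift `σ^n x` of an infinite path. -/
def shift (x : InfPath Λ) (n : Fin k → ℕ) : InfPath Λ where
  val p m := x.val (p + n) m
  d_val p m := x.d_val _ _
  r_val p m := x.r_val _ _
  s_val p m := by rw [x.s_val, add_right_comm]
  comp_val p m m' := by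
    show Λ.comp (x.val (p + n) m) (x.val (p + m + n) m') = x.val (p + n) (m + m')
    rw [add_right_comm p m n]; exact x.comp_val (p + n) m m'

/-- An infinite path lies in the subgraph determined by the set of paths `P`
if all of its segments lie in `P`. -/
def inSub (P : Set Λ.Path) (x : InfPath Λ) : Prop := ∀ p n, x.val p n ∈ P

end InfPath

/-- `z = μ x`: `z` is the infinite path obtained by prepending the finite
path `μ` to the infinite path `x` (which requires `s μ = x(0,0)`). -/
def KGraph.IsExtension {k : ℕ} (Λ : KGraph k) (μ : Λ.Path) (x z : InfPath Λ) : Prop :=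
  Λ.s μ = x.val 0 0 ∧ ∀ n, z.val 0 (Λ.d μ + n) = Λ.comp μ (x.val 0 n)

/-- A cycline pair `(μ, 1, ν)` of the subgraph of `Λ` determined by the set of
paths `P`: `s μ = s ν` and `μ x = ν x` for every infinite path `x` of the
subgraph with range `s ν`. -/
def KGraph.IsCyclinePair {k : ℕ} (Λ : KGraph k) (P : Set Λ.Path) (μ ν : Λ.Path) : Prop :=
  μ ∈ P ∧ ν ∈ P ∧ Λ.s μ = Λ.s ν ∧
    ∀ x : InfPath Λ, x.inSub P →
      ∀ z : InfPath Λ, Λ.IsExtension ν x z → Λ.IsExtension μ x z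

/-- `Per_Γ` for the subgraph `Γ` of `Λ` determined by `P`:
the set of all `d μ − d ν` over cycline pairs `(μ, 1, ν)`. -/
def KGraph.PerPair {k : ℕ} (Λ : KGraph k) (P : Set Λ.Path) : Set (Fin k → ℤ) :=
  {m | ∃ μ ν, Λ.IsCyclinePair P μ ν ∧ m = fun i => (Λ.d μ i : ℤ) - (Λ.d ν i : ℤ)}

/-- A self-similar `k`-graph `(G, Λ)`: an action of the countable discrete
group `G` on `Λ` together with a restriction map `(g, μ) ↦ g|_μ`. -/
structure SelfSimilarSys (k : ℕ) (G : Type) [Group G] [Countable G] (Λ : KGraph k) where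
  act : G → Λ.Path → Λ.Path
  res : G → Λ.Path → G
  act_one : ∀ μ, act 1 μ = μ
  act_mul : ∀ g h μ, act (g * h) μ = act g (act h μ)
  d_act : ∀ g μ, Λ.d (act g μ) = Λ.d μ
  s_act : ∀ g μ, Λ.s (act g μ) = act g (Λ.s μ)
  r_act : ∀ g μ, Λ.r (act g μ) = act g (Λ.r μ)
  act_comp : ∀ g μ ν, Λ.s μ = Λ.r ν →
    act g (Λ.comp μ ν) = Λ.comp (act g μ) (act (res g μ) ν)
  res_vertex : ∀ g v, Λ.IsVertex v → res g v = g
  res_comp : ∀ g μ ν, Λ.s μ = Λ.r ν → res g (Λ.comp μ ν) = res (res g μ) ν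
  res_one : ∀ μ, res 1 μ = 1
  res_mul : ∀ g h μ, res (g * h) μ = res g (act h μ) * res h μ

namespace SelfSimilarSys

variable {k : ℕ} {G : Type} [Group G] [Countable G] {Λ : KGraph k}

/-- `(G, Λ)` is pseudo free: `g·μ = μ` and `g|_μ = 1` imply `g = 1`. -/
def PseudoFree (S : SelfSimilarSys k G Λ) : Prop :=
  ∀ g μ, S.act g μ = μ → S.res g μ = 1 → g = 1

/-- `y = g · x` for infinite paths: `y(0, n) = g · x(0, n)` for all `n`. -/
def IsGAct (S : SelfSimilarSys k G Λ) (g : G) (x y : InfPath Λ) : Prop :=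
  ∀ n, y.val 0 n = S.act g (x.val 0 n)

/-- A cycline triple `(μ, g, ν)` of the subgraph of `Λ` determined by `P`:
`s μ = g · s ν` and `μ (g · x) = ν x` for every infinite path `x` of the
subgraph with range `s ν`. -/
def IsCyclineTriple (S : SelfSimilarSys k G Λ) (P : Set Λ.Path)
    (μ : Λ.Path) (g : G) (ν : Λ.Path) : Prop :=
  μ ∈ P ∧ ν ∈ P ∧ Λ.s μ = S.act g (Λ.s ν) ∧
    ∀ x : InfPath Λ, x.inSub P → Λ.s ν = x.val 0 0 →
      ∀ y : InfPath Λ, S.IsGAct g x y →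
        ∀ z : InfPath Λ, Λ.IsExtension ν x z → Λ.IsExtension μ y z

/-- `Per_{G,Γ}` for the subgraph `Γ` of `Λ` determined by `P`:
the set of all `d μ − d ν` over cycline triples `(μ, g, ν)`. -/
def PerTriple (S : SelfSimilarSys k G Λ) (P : Set Λ.Path) : Set (Fin k → ℤ) :=
  {m | ∃ μ g ν, S.IsCyclineTriple P μ g ν ∧ m = fun i => (Λ.d μ i : ℤ) - (Λ.d ν i : ℤ)}

/-- Membership `y ∈ [x]`: `y` is an infinite path of `ΛT` and
`σ^p x = g · σ^q y` for some `p, q ∈ ℕ^k` and `g ∈ G`. -/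
def ClassMem (S : SelfSimilarSys k G Λ) (T : Set Λ.Path) (x y : InfPath Λ) : Prop :=
  y.inSub (Λ.tailPaths T) ∧ ∃ p q : Fin k → ℕ, ∃ g : G, S.IsGAct g (y.shift q) (x.shift p)

end SelfSimilarSys

/-- `H_T`: the vertices `v ∈ T` such that for all `p, q ∈ ℕ^k` with
`p − q ∈ Per_{ΛT}` and every `μ ∈ v Λ^p T` there is a unique `ν ∈ v Λ^q T`
with `(μ, 1, ν)` a cycline pair of `ΛT`. -/
def KGraph.HSet {k : ℕ} (Λ : KGraph k) (T : Set Λ.Path) : Set Λ.Path :=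
  {v | v ∈ T ∧ ∀ p q : Fin k → ℕ,
    (fun i => (p i : ℤ) - (q i : ℤ)) ∈ Λ.PerPair (Λ.tailPaths T) →
      ∀ μ, Λ.r μ = v → Λ.d μ = p → Λ.s μ ∈ T →
        ∃! ν, Λ.r ν = v ∧ Λ.d ν = q ∧ Λ.IsCyclinePair (Λ.tailPaths T) μ ν}


/-!
A cycline triple of `H_T ΛT` is already one of `ΛT`, because every infinite path of `ΛT` whose
range lies in `H_T` stays in `H_T`: the set `H_T` is hereditary inside `T`. Heredity along a
path `lam` with `r lam ∈ H_T` comes from the correspondence between cycline pairs `(μ, ν)` at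
`s lam` and cycline pairs `(lam μ, lam ν)` at `r lam`; that every cycline partner of `lam μ`
in `ΛT` factors through `lam` is read off from a single infinite path of `ΛT`, which exists
because `T` is a maximal tail. Infinite paths are built from coherent families of finite
prefixes.
-/

namespace KGraph

variable {k : ℕ} {Λ : KGraph k}

lemma s_eq_self_of_isVertex {v : Λ.Path} (hv : Λ.IsVertex v) : Λ.s v = v := by
  have hr := Λ.eq_r_of_d_eq_zero v hv
  rw [hr, Λ.s_r]

lemma eq_of_comp_eq_comp {a b a' b' : Λ.Path} (h : Λ.s a = Λ.r b) (h' : Λ.s a' = Λ.r b')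
    (hd : Λ.d a = Λ.d a') (he : Λ.comp a b = Λ.comp a' b') : a = a' ∧ b = b' := by
  have hdb : Λ.d b = Λ.d b' := by
    have := Λ.d_comp a b h
    rw [he, Λ.d_comp a' b' h', hd] at this
    exact (add_left_cancel this).symm
  obtain ⟨_, -, huniq⟩ := Λ.factor (Λ.comp a b) (Λ.d a) (Λ.d b) (Λ.d_comp a b h)
  have e := (huniq (a, b) ⟨h, rfl, rfl, rfl⟩).trans
    (huniq (a', b') ⟨h', hd.symm, hdb.symm, he.symm⟩).symm
  exact Prod.ext_iff.mp e

variable (Λ) in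
def IsPrefix (a b : Λ.Path) : Prop := ∃ e, Λ.s a = Λ.r e ∧ Λ.comp a e = b

lemma isPrefix_comp {a e : Λ.Path} (h : Λ.s a = Λ.r e) : Λ.IsPrefix a (Λ.comp a e) :=
  ⟨e, h, rfl⟩

instance : Std.Refl Λ.IsPrefix :=
  ⟨fun a => ⟨Λ.s a, (Λ.r_s a).symm, Λ.comp_id a⟩⟩

lemma IsPrefix.trans {a b c : Λ.Path} (hab : Λ.IsPrefix a b) (hbc : Λ.IsPrefix b c) :
    Λ.IsPrefix a c := by
  obtain ⟨e, he, rfl⟩ := hab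
  obtain ⟨f, hf, rfl⟩ := hbc
  rw [Λ.s_comp a e he] at hf
  exact ⟨Λ.comp e f, by rw [Λ.r_comp e f hf]; exact he, (Λ.comp_assoc a e f he hf).symm⟩

instance : IsTrans Λ.Path Λ.IsPrefix :=
  ⟨fun _ _ _ => IsPrefix.trans⟩

lemma IsPrefix.eq_of_d_eq {a b c : Λ.Path} (ha : Λ.IsPrefix a c) (hb : Λ.IsPrefix b c)
    (hd : Λ.d a = Λ.d b) : a = b := by
  obtain ⟨e, he, hc⟩ := ha
  obtain ⟨f, hf, rfl⟩ := hb
  exact (eq_of_comp_eq_comp he hf hd hc).1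

lemma exists_isPrefix_of_le {m : Fin k → ℕ} {b : Λ.Path} (h : m ≤ Λ.d b) :
    ∃ a, Λ.IsPrefix a b ∧ Λ.d a = m := by
  obtain ⟨⟨a, e⟩, ⟨hae, hda, -, hc⟩, -⟩ :=
    Λ.factor b m (Λ.d b - m) (add_tsub_cancel_of_le h).symm
  exact ⟨a, ⟨e, hae, hc⟩, hda⟩

lemma IsPrefix.of_isPrefix_of_d_le {a b c : Λ.Path} (ha : Λ.IsPrefix a c)
    (hb : Λ.IsPrefix b c) (hd : Λ.d a ≤ Λ.d b) : Λ.IsPrefix a b := by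
  obtain ⟨a', ha', hda'⟩ := exists_isPrefix_of_le hd
  rwa [(ha'.trans hb).eq_of_d_eq ha hda'] at ha'

end KGraph

namespace InfPath

variable {k : ℕ} {Λ : KGraph k}

section OfPrefixes

variable {P : (Fin k → ℕ) → Λ.Path} (hP : ∀ m n, Λ.IsPrefix (P m) (P (m + n)))

noncomputable def segOfPrefixes (p n : Fin k → ℕ) : Λ.Path := (hP p n).choose

lemma s_eq_r_segOfPrefixes (p n : Fin k → ℕ) : Λ.s (P p) = Λ.r (segOfPrefixes hP p n) :=
  (hP p n).choose_spec.1

lemma comp_segOfPrefixes (p n : Fin k → ℕ) :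
    Λ.comp (P p) (segOfPrefixes hP p n) = P (p + n) :=
  (hP p n).choose_spec.2

lemma segOfPrefixes_zero (p : Fin k → ℕ) : segOfPrefixes hP p 0 = Λ.s (P p) :=
  (KGraph.eq_of_comp_eq_comp (s_eq_r_segOfPrefixes hP p 0) (Λ.r_s _).symm rfl
    (by rw [comp_segOfPrefixes, add_zero, Λ.comp_id])).2

lemma d_segOfPrefixes (hd : ∀ m, Λ.d (P m) = m) (p n : Fin k → ℕ) :
    Λ.d (segOfPrefixes hP p n) = n := by
  have h := Λ.d_comp _ _ (s_eq_r_segOfPrefixes hP p n)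
  rw [comp_segOfPrefixes, hd, hd] at h
  exact (add_left_cancel h).symm

lemma comp_segOfPrefixes_segOfPrefixes (p m n : Fin k → ℕ) :
    Λ.comp (segOfPrefixes hP p m) (segOfPrefixes hP (p + m) n) = segOfPrefixes hP p (m + n) := by
  have h₁ := s_eq_r_segOfPrefixes hP p m
  have h₂ : Λ.s (segOfPrefixes hP p m) = Λ.r (segOfPrefixes hP (p + m) n) := by
    rw [← s_eq_r_segOfPrefixes hP (p + m) n, ← comp_segOfPrefixes hP p m, Λ.s_comp _ _ h₁]
  refine (KGraph.eq_of_comp_eq_comp (by rw [Λ.r_comp _ _ h₂]; exact h₁)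
    (s_eq_r_segOfPrefixes hP p (m + n)) rfl ?_).2
  rw [← Λ.comp_assoc _ _ _ h₁ h₂, comp_segOfPrefixes hP p m, comp_segOfPrefixes hP (p + m) n,
    comp_segOfPrefixes hP p (m + n), add_assoc]

noncomputable def ofPrefixes (hd : ∀ m, Λ.d (P m) = m) : InfPath Λ where
  val := segOfPrefixes hP
  d_val := d_segOfPrefixes hP hd
  r_val p n := by rw [segOfPrefixes_zero, s_eq_r_segOfPrefixes hP p n]
  s_val p n := by
    rw [segOfPrefixes_zero, ← comp_segOfPrefixes hP p n,
      Λ.s_comp _ _ (s_eq_r_segOfPrefixes hP p n)]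
  comp_val := comp_segOfPrefixes_segOfPrefixes hP

lemma ofPrefixes_val_zero (hd : ∀ m, Λ.d (P m) = m) (m : Fin k → ℕ) :
    (ofPrefixes hP hd).val 0 m = P m := by
  have hP0 : Λ.s (P 0) = Λ.r (P m) := by
    rw [KGraph.s_eq_self_of_isVertex (hd 0), ← zero_add m, ← comp_segOfPrefixes hP 0 m,
      Λ.r_comp _ _ (s_eq_r_segOfPrefixes hP 0 m), ← Λ.eq_r_of_d_eq_zero _ (hd 0)]
  refine (KGraph.eq_of_comp_eq_comp (s_eq_r_segOfPrefixes hP 0 m) hP0 rfl ?_).2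
  rw [comp_segOfPrefixes, zero_add, ← KGraph.s_eq_self_of_isVertex (hd 0), hP0, Λ.id_comp]

end OfPrefixes

theorem exists_isPrefix_val_zero {W : (Fin k → ℕ) → Λ.Path} (hW : ∀ m, m ≤ Λ.d (W m))
    (hmono : ∀ m n, Λ.IsPrefix (W m) (W (m + n))) :
    ∃ x : InfPath Λ, ∀ m, Λ.IsPrefix (x.val 0 m) (W m) := by
  choose P hPW hPd using fun m => KGraph.exists_isPrefix_of_le (hW m)
  have hP : ∀ m n, Λ.IsPrefix (P m) (P (m + n)) := fun m n =>
    ((hPW m).trans (hmono m n)).of_isPrefix_of_d_le (hPW (m + n))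
      (by rw [hPd, hPd]; exact le_self_add)
  exact ⟨ofPrefixes hP hPd, fun m => by rw [ofPrefixes_val_zero]; exact hPW m⟩

lemma val_zero_eq_of_isPrefix {W : (Fin k → ℕ) → Λ.Path}
    (hmono : ∀ m n, Λ.IsPrefix (W m) (W (m + n))) {x : InfPath Λ}
    (hx : ∀ m, Λ.IsPrefix (x.val 0 m) (W m)) {a : Λ.Path} {m : Fin k → ℕ}
    (ha : Λ.IsPrefix a (W m)) : x.val 0 (Λ.d a) = a :=
  ((hx _).trans (hmono _ m)).eq_of_d_eq (by rw [add_comm]; exact ha.trans (hmono m _))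
    (x.d_val 0 _)

end InfPath

namespace InfPath

variable {k : ℕ} {Λ : KGraph k}

lemma val_zero_eq_and_shift_val_eq {x : InfPath Λ} {a b : Λ.Path} {n : Fin k → ℕ}
    (hab : Λ.s a = Λ.r b) (h : x.val 0 (Λ.d a + n) = Λ.comp a b) :
    x.val 0 (Λ.d a) = a ∧ (x.shift (Λ.d a)).val 0 n = b :=
  KGraph.eq_of_comp_eq_comp (by rw [x.s_val]; exact ((x.shift _).r_val 0 n).symm) hab (x.d_val 0 _)
    ((x.comp_val 0 _ n).trans h)

end InfPath

namespace KGraph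

variable {k : ℕ} {Λ : KGraph k}

lemma IsExtension.val_d {μ : Λ.Path} {x z : InfPath Λ} (h : Λ.IsExtension μ x z) :
    z.val 0 (Λ.d μ) = μ := by
  have h0 := h.2 0
  rwa [add_zero, ← h.1, Λ.comp_id] at h0

lemma isExtension_shift {μ : Λ.Path} {z : InfPath Λ} (h : z.val 0 (Λ.d μ) = μ) :
    Λ.IsExtension μ (z.shift (Λ.d μ)) z := by
  refine ⟨?_, fun n => ?_⟩
  · show Λ.s μ = z.val (0 + Λ.d μ) 0
    rw [← z.s_val 0 (Λ.d μ), h]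
  · show z.val 0 (Λ.d μ + n) = Λ.comp μ (z.val (0 + Λ.d μ) n)
    rw [← z.comp_val, h]

lemma IsExtension.congr {μ : Λ.Path} {x z z' : InfPath Λ} (h : Λ.IsExtension μ x z)
    (hz : ∀ n, z.val 0 n = z'.val 0 n) : Λ.IsExtension μ x z' :=
  ⟨h.1, fun n => (hz _).symm.trans (h.2 n)⟩

lemma IsExtension.shift_val {μ : Λ.Path} {x z : InfPath Λ} (h : Λ.IsExtension μ x z)
    (n : Fin k → ℕ) : (z.shift (Λ.d μ)).val 0 n = x.val 0 n :=
  (InfPath.val_zero_eq_and_shift_val_eq (by rw [x.r_val]; exact h.1) (h.2 n)).2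

lemma IsExtension.comp {a b : Λ.Path} {x y z : InfPath Λ} (ha : Λ.IsExtension a y z)
    (hb : Λ.IsExtension b x y) : Λ.IsExtension (Λ.comp a b) x z := by
  have hab : Λ.s a = Λ.r b := by rw [ha.1, ← hb.val_d, y.r_val]
  have hbx : ∀ n, Λ.s b = Λ.r (x.val 0 n) := fun n => by rw [x.r_val]; exact hb.1
  refine ⟨by rw [Λ.s_comp a b hab]; exact hb.1, fun n => ?_⟩
  rw [Λ.d_comp a b hab, add_assoc, ha.2, hb.2, Λ.comp_assoc a b _ hab (hbx n)]

lemma IsExtension.of_comp {a b : Λ.Path} {x z : InfPath Λ} (hab : Λ.s a = Λ.r b)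
    (h : Λ.IsExtension (Λ.comp a b) x z) :
    Λ.IsExtension a (z.shift (Λ.d a)) z ∧ Λ.IsExtension b x (z.shift (Λ.d a)) := by
  have hbx : ∀ n, Λ.s b = Λ.r (x.val 0 n) := fun n => by
    rw [x.r_val, ← Λ.s_comp a b hab]; exact h.1
  have hsplit : ∀ n, z.val 0 (Λ.d a) = a ∧
      (z.shift (Λ.d a)).val 0 (Λ.d b + n) = Λ.comp b (x.val 0 n) := fun n =>
    InfPath.val_zero_eq_and_shift_val_eq (by rw [Λ.r_comp b _ (hbx n)]; exact hab)
      (by rw [← add_assoc, ← Λ.d_comp a b hab, h.2, Λ.comp_assoc a b _ hab (hbx n)])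
  exact ⟨isExtension_shift (hsplit 0).1, (hbx 0).trans (x.r_val 0 0), fun n => (hsplit n).2⟩

theorem exists_isExtension (μ : Λ.Path) {x : InfPath Λ} (h : Λ.s μ = x.val 0 0) :
    ∃ z, Λ.IsExtension μ x z := by
  have hμx : ∀ n, Λ.s μ = Λ.r (x.val 0 n) := fun n => by rw [x.r_val]; exact h
  have hmono : ∀ m n, Λ.IsPrefix (Λ.comp μ (x.val 0 m)) (Λ.comp μ (x.val 0 (m + n))) := by
    intro m n
    rw [← x.comp_val, ← Λ.comp_assoc _ _ _ (hμx m) (by rw [x.s_val, x.r_val])]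
    exact isPrefix_comp (by rw [Λ.s_comp _ _ (hμx m), x.s_val, x.r_val])
  obtain ⟨z, hz⟩ := InfPath.exists_isPrefix_val_zero
    (fun m => by rw [Λ.d_comp _ _ (hμx m), x.d_val]; exact le_add_self) hmono
  refine ⟨z, h, fun n => ?_⟩
  have := InfPath.val_zero_eq_of_isPrefix hmono hz (refl (Λ.comp μ (x.val 0 n)))
  rwa [Λ.d_comp _ _ (hμx n), x.d_val] at this

end KGraph

namespace MaximalTail

variable {k : ℕ} {Λ : KGraph k} {T : Set Λ.Path}

lemma s_mem_of_isPrefix (hT : MaximalTail Λ T) {a b : Λ.Path} (hab : Λ.IsPrefix a b)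
    (hb : Λ.s b ∈ T) : Λ.s a ∈ T := by
  obtain ⟨e, he, rfl⟩ := hab
  rw [Λ.s_comp a e he] at hb
  rw [he]
  exact hT.backward_closed _ (Λ.d_r e) _ hb ⟨e, rfl, rfl⟩

lemma exists_isPrefix_chain (hT : MaximalTail Λ T) {v : Λ.Path} (hv : v ∈ T) :
    ∃ c : ℕ → Λ.Path, c 0 = v ∧ (∀ j, Λ.s (c j) ∈ T) ∧ (∀ j, Λ.d (c j) = fun _ => j) ∧
      ∀ j, Λ.IsPrefix (c j) (c (j + 1)) := by
  choose e hre hde hse using fun μ : {μ : Λ.Path // Λ.s μ ∈ T} => hT.reaches _ μ.2 1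
  let step (μ : {μ : Λ.Path // Λ.s μ ∈ T}) : {μ : Λ.Path // Λ.s μ ∈ T} :=
    ⟨Λ.comp μ (e μ), by rw [Λ.s_comp _ _ (hre μ).symm]; exact hse μ⟩
  let c (j : ℕ) := step^[j] ⟨v, by rwa [KGraph.s_eq_self_of_isVertex (hT.vertex v hv)]⟩
  have hsucc : ∀ j, c (j + 1) = step (c j) := fun j => Function.iterate_succ_apply' ..
  refine ⟨fun j => (c j).1, rfl, fun j => (c j).2, fun j => ?_, fun j => ?_⟩
  · dsimp only
    induction j with
    | zero => exact hT.vertex v hv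
    | succ j ih =>
      rw [hsucc, Λ.d_comp _ _ (hre _).symm, ih, hde]
      funext i
      simp
  · dsimp only
    rw [hsucc]
    exact KGraph.isPrefix_comp (hre _).symm

theorem exists_infPath (hT : MaximalTail Λ T) {v : Λ.Path} (hv : v ∈ T) :
    ∃ x : InfPath Λ, x.inSub (Λ.tailPaths T) ∧ x.val 0 0 = v := by
  obtain ⟨c, hc0, hcT, hcd, hc⟩ := hT.exists_isPrefix_chain hv
  have hcmono : ∀ {i j}, i ≤ j → Λ.IsPrefix (c i) (c j) :=
    fun hij => Nat.rel_of_forall_rel_succ_of_le _ hc hij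
  have hmono : ∀ m n : Fin k → ℕ, Λ.IsPrefix (c (∑ i, m i)) (c (∑ i, (m + n) i)) :=
    fun m n => hcmono (Finset.sum_le_sum fun i _ => le_self_add)
  obtain ⟨x, hx⟩ := InfPath.exists_isPrefix_val_zero (W := fun m => c (∑ i, m i))
    (fun m => Pi.le_def.mpr fun i => by
      rw [hcd]; exact Finset.single_le_sum (fun _ _ => Nat.zero_le _) (Finset.mem_univ i)) hmono
  refine ⟨x, fun p n => ?_, ?_⟩
  · show Λ.s (x.val p n) ∈ T
    rw [x.s_val, ← zero_add (p + n), ← x.s_val]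
    exact hT.s_mem_of_isPrefix (hx _) (hcT _)
  · have := InfPath.val_zero_eq_of_isPrefix hmono hx (m := 0) 
      (by simp only [Pi.zero_apply, Finset.sum_const_zero, hc0]; exact refl v)
    rwa [hT.vertex v hv] at this

end MaximalTail

namespace KGraph

variable {k : ℕ} {Λ : KGraph k} {T : Set Λ.Path}

lemma IsCyclinePair.comp_left {lam μ ν : Λ.Path} (h : Λ.IsCyclinePair (Λ.tailPaths T) μ ν)
    (hμ : Λ.s lam = Λ.r μ) (hν : Λ.s lam = Λ.r ν) :
    Λ.IsCyclinePair (Λ.tailPaths T) (Λ.comp lam μ) (Λ.comp lam ν) := by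
  obtain ⟨hμT, hνT, hs, hext⟩ := h
  refine ⟨?_, ?_, by rw [Λ.s_comp _ _ hμ, Λ.s_comp _ _ hν, hs], fun x hx z hz => ?_⟩
  · show Λ.s (Λ.comp lam μ) ∈ T
    rwa [Λ.s_comp _ _ hμ]
  · show Λ.s (Λ.comp lam ν) ∈ T
    rwa [Λ.s_comp _ _ hν]
  · obtain ⟨hlam, hzν⟩ := hz.of_comp hν
    exact hlam.comp (hext x hx _ hzν)

lemma IsCyclinePair.of_comp_left {lam μ ν : Λ.Path}
    (h : Λ.IsCyclinePair (Λ.tailPaths T) (Λ.comp lam μ) (Λ.comp lam ν))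
    (hμ : Λ.s lam = Λ.r μ) (hν : Λ.s lam = Λ.r ν) : Λ.IsCyclinePair (Λ.tailPaths T) μ ν := by
  obtain ⟨hμT, hνT, hs, hext⟩ := h
  refine ⟨?_, ?_, by rwa [Λ.s_comp _ _ hμ, Λ.s_comp _ _ hν] at hs, fun x hx z hz => ?_⟩
  · show Λ.s μ ∈ T
    rwa [← Λ.s_comp _ _ hμ]
  · show Λ.s ν ∈ T
    rwa [← Λ.s_comp _ _ hν]
  · obtain ⟨w, hw⟩ := exists_isExtension lam (x := z) (by rw [hν, ← hz.val_d, z.r_val])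
    exact ((hext x hx w (hw.comp hz)).of_comp hμ).2.congr hw.shift_val

/-- Testing the cycline pair condition on `ν x` for one infinite path `x` of `ΛT` shows that
`ν x = lam μ x` starts with `lam`. -/
lemma IsCyclinePair.exists_eq_comp (hT : MaximalTail Λ T) {lam μ ν : Λ.Path}
    {q : Fin k → ℕ} (h : Λ.IsCyclinePair (Λ.tailPaths T) (Λ.comp lam μ) ν)
    (hμ : Λ.s lam = Λ.r μ) (hd : Λ.d ν = Λ.d lam + q) :
    ∃ ν₁, Λ.s lam = Λ.r ν₁ ∧ Λ.d ν₁ = q ∧ Λ.comp lam ν₁ = ν := by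
  obtain ⟨x, hx, hx0⟩ := hT.exists_infPath h.2.1
  obtain ⟨z, hz⟩ := exists_isExtension ν hx0.symm
  obtain ⟨hlam, -⟩ := (h.2.2.2 x hx z hz).of_comp hμ
  refine ⟨(z.shift (Λ.d lam)).val 0 q, hlam.1.trans ((z.shift _).r_val 0 q).symm,
    InfPath.d_val _ 0 q, ?_⟩
  rw [← hlam.2, ← hd, hz.val_d]

theorem s_mem_hSet (hT : MaximalTail Λ T) {lam : Λ.Path} (hs : Λ.s lam ∈ T)
    (hr : Λ.r lam ∈ Λ.HSet T) : Λ.s lam ∈ Λ.HSet T := by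
  refine ⟨hs, fun p q hpq μ hrμ hdμ hsμ => ?_⟩
  have hlamμ : Λ.s lam = Λ.r μ := hrμ.symm
  have hper : (fun i => ((Λ.d lam + p) i : ℤ) - ((Λ.d lam + q) i : ℤ)) ∈
      Λ.PerPair (Λ.tailPaths T) := by
    convert hpq using 2 with i
    simp only [Pi.add_apply]
    push_cast
    ring
  obtain ⟨ν', ⟨-, hdν', hpair⟩, huniq⟩ := hr.2 _ _ hper (Λ.comp lam μ) (Λ.r_comp _ _ hlamμ)
    (by rw [Λ.d_comp _ _ hlamμ, hdμ]) (by rwa [Λ.s_comp _ _ hlamμ])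
  obtain ⟨ν, hlamν, hdν, rfl⟩ := hpair.exists_eq_comp hT hlamμ hdν'
  refine ⟨ν, ⟨hlamν.symm, hdν, hpair.of_comp_left hlamμ hlamν⟩, ?_⟩
  rintro ν₂ ⟨hrν₂, hdν₂, hpair₂⟩
  have he := huniq (Λ.comp lam ν₂) ⟨Λ.r_comp _ _ hrν₂.symm,
    by rw [Λ.d_comp _ _ hrν₂.symm, hdν₂], hpair₂.comp_left hlamμ hrν₂.symm⟩
  exact (eq_of_comp_eq_comp hrν₂.symm hlamν rfl he).2

end KGraph

lemma InfPath.inSub_cornerPaths_hSet {k : ℕ} {Λ : KGraph k} {T : Set Λ.Path}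
    (hT : MaximalTail Λ T) {x : InfPath Λ} (hx : x.inSub (Λ.tailPaths T))
    (hx0 : x.val 0 0 ∈ Λ.HSet T) : x.inSub (Λ.cornerPaths T (Λ.HSet T)) := by
  refine fun p n => ⟨hx p n, ?_⟩
  rw [x.r_val, ← zero_add p, ← x.s_val]
  exact KGraph.s_mem_hSet hT (hx 0 p) (by rwa [x.r_val])

theorem cycline_triples_of_corner_are_pairs_general
    {k : ℕ} (G : Type) [Group G] [Countable G] (Λ : KGraph k)
    (S : SelfSimilarSys k G Λ)
    (T : Set Λ.Path) (hT : MaximalTail Λ T)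
    (hcyc : ∀ μ g ν, S.IsCyclineTriple (Λ.tailPaths T) μ g ν → g = 1) :
    ∀ μ g ν, S.IsCyclineTriple (Λ.cornerPaths T (Λ.HSet T)) μ g ν → g = 1 := by
  rintro μ g ν ⟨⟨hμT, -⟩, ⟨hνT, hνH⟩, hsμ, hext⟩
  have hsνH : Λ.s ν ∈ Λ.HSet T := KGraph.s_mem_hSet hT hνT hνH
  refine hcyc μ g ν ⟨hμT, hνT, hsμ, fun x hx hx0 => hext x ?_ hx0⟩
  exact InfPath.inSub_cornerPaths_hSet hT hx (hx0 ▸ hsνH)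

/-- For a pseudo free self-similar `k`-graph `(G, Λ)` with `g · v = v` for
all vertices `v`, and a maximal tail `T` of `Λ`: if every cycline triple of
`(G, ΛT)` is a cycline pair (i.e. has group element `1`), then every cycline
triple of `(G, H_T ΛT)` is a cycline pair. -/
theorem cycline_triples_of_corner_are_pairs
    {k : ℕ} (G : Type) [Group G] [Countable G] (Λ : KGraph k)
    (hRF : Λ.RowFinite) (hSF : Λ.SourceFree)
    (S : SelfSimilarSys k G Λ) (hPF : S.PseudoFree)
    (hfix : ∀ g v, Λ.IsVertex v → S.act g v = v)
    (T : Set Λ.Path) (hT : MaximalTail Λ T)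
    (hcyc : ∀ μ g ν, S.IsCyclineTriple (Λ.tailPaths T) μ g ν → g = 1) :
    ∀ μ g ν, S.IsCyclineTriple (Λ.cornerPaths T (Λ.HSet T)) μ g ν → g = 1 :=
  cycline_triples_of_corner_are_pairs_general G Λ S T hT hcyc
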